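/- arXiv:2411.16117 — 2 statements merged into one kernel-verified Lean document; each statement's English description precedes it below -/
import Mathlib

section
/- For the one-dimensional Gaussian mechanism M(D) = f(D) + N(0, σ²) with sensitivity Δ = sup over adjacent pairs |f(D) - f(D')|, if ε ∈ (0,1), δ ∈ (0,1), and σ ≥ Δ·√(2·ln(1.25/δ))/ε, then M is (ε, δ)-differentially private. -/
open MeasureTheory ProbabilityTheory

def IsDP {D S : Type*} [MeasurableSpace S] (adj : D → D → Prop)
    (M : D → Measure S) (ε δ : ℝ) : Prop :=
  ∀ s : Set S, MeasurableSet s → ∀ d d' : D, adj d d' →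
    M d s ≤ ENNReal.ofReal (Real.exp ε) * M d' s + ENNReal.ofReal δ

/-! The privacy loss `log (p_μ x / p_μ' x)` of `N(μ, σ²)` against `N(μ', σ²)` is affine in `x`, so
the set where the density ratio exceeds `e^ε` is a half-line. Writing `x = μ + τ z` with `τ = ±σ`,
it becomes `{z > a - ε / (2a)}` for a standard Gaussian `z`, where `a = σε / |μ - μ'|`. Off that set
the densities give the factor `e^ε`; on it, `a ≥ √(2 log (1.25 / δ))` and the tail bound
`P(Z > t) ≤ e^{-t²/2} / 2` give mass at most `δ`. For `δ` close to `1` the threshold can be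
negative, and then `P(Z > t) ≤ 1/2 + |t| / √(2π)` is enough.
-/

open Real Set
open scoped NNReal ENNReal

theorem withDensity_apply_le_mul_add {α : Type*} [MeasurableSpace α] {ν : Measure α} [SFinite ν]
    {p q : α → ℝ≥0∞} (hq : Measurable q) (c : ℝ≥0∞) (s : Set α) :
    ν.withDensity p s ≤ c * ν.withDensity q s + ν.withDensity p {x | c * q x < p x} := by
  calc ν.withDensity p s
      ≤ ν.withDensity p (s ∩ {x | p x ≤ c * q x}) + ν.withDensity p {x | c * q x < p x} := by
        refine (measure_mono fun x hx => ?_).trans (measure_union_le _ _)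
        by_cases h : p x ≤ c * q x
        exacts [Or.inl ⟨hx, h⟩, Or.inr (not_le.1 h)]
    _ ≤ c * ν.withDensity q s + ν.withDensity p {x | c * q x < p x} := by
        gcongr
        rw [withDensity_apply' _, withDensity_apply' _, ← lintegral_const_mul c hq]
        calc ∫⁻ x in s ∩ {x | p x ≤ c * q x}, p x ∂ν
            ≤ ∫⁻ x in s ∩ {x | p x ≤ c * q x}, c * q x ∂ν :=
              setLIntegral_mono (hq.const_mul c) fun x hx => hx.2
          _ ≤ ∫⁻ x in s, c * q x ∂ν := lintegral_mono_set inter_subset_left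

theorem ofReal_exp_mul_gaussianPDF_lt_iff {μ μ' ε x : ℝ} {v : ℝ≥0} (hv : v ≠ 0) :
    ENNReal.ofReal (exp ε) * gaussianPDF μ' v x < gaussianPDF μ v x ↔
      2 * v * ε < (x - μ') ^ 2 - (x - μ) ^ 2 := by
  have hv0 : (0 : ℝ) < v := by positivity
  rw [gaussianPDF, gaussianPDF, ← ENNReal.ofReal_mul (exp_pos ε).le,
    ENNReal.ofReal_lt_ofReal_iff (gaussianPDFReal_pos _ _ _ hv), gaussianPDFReal,
    gaussianPDFReal, mul_left_comm, mul_lt_mul_iff_right₀ (by positivity), ← exp_add, exp_lt_exp,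
    ← sub_pos, ← sub_pos (b := 2 * (v : ℝ) * ε)]
  have : -(x - μ) ^ 2 / (2 * v) - (ε + -(x - μ') ^ 2 / (2 * v))
      = ((x - μ') ^ 2 - (x - μ) ^ 2 - 2 * v * ε) / (2 * v) := by field_simp; ring
  rw [this, div_pos_iff_of_pos_right (by positivity)]

theorem gaussianReal_map_const_add_mul (μ τ : ℝ) :
    (gaussianReal 0 1).map (fun z => μ + τ * z) = gaussianReal μ (τ ^ 2).toNNReal := by
  have : (fun z => μ + τ * z) = (μ + ·) ∘ (τ * ·) := rfl
  rw [this, ← Measure.map_map (by fun_prop) (by fun_prop), gaussianReal_map_const_mul,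
    gaussianReal_map_const_add]
  congr 1
  · ring
  · ext; simp [sq_nonneg]

theorem gaussianReal_Ioi_self {μ : ℝ} {v : ℝ≥0} (hv : v ≠ 0) :
    gaussianReal μ v (Ioi μ) = 2⁻¹ := by
  have := nullSingletonClass_gaussianReal (μ := μ) hv
  have hsymm : gaussianReal μ v (Iio μ) = gaussianReal μ v (Ioi μ) := by
    have hrefl : (gaussianReal μ v).map (2 * μ - ·) = gaussianReal μ v := by
      rw [gaussianReal_map_const_sub]; ring_nf
    calc gaussianReal μ v (Iio μ) = (gaussianReal μ v).map (2 * μ - ·) (Iio μ) := by rw [hrefl]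
      _ = gaussianReal μ v ((2 * μ - ·) ⁻¹' Iio μ) :=
          Measure.map_apply (by fun_prop) measurableSet_Iio
      _ = gaussianReal μ v (Ioi μ) := by
          congr 1
          ext x
          simp only [mem_preimage, mem_Iio, mem_Ioi]
          constructor <;> intro h <;> linarith
  have htotal : gaussianReal μ v (Iio μ) + gaussianReal μ v (Ioi μ) = 1 := by
    rw [← measure_union Iio_disjoint_Ioi_same measurableSet_Ioi, Iio_union_Ioi,
      prob_compl_eq_one_sub (measurableSet_singleton μ), measure_singleton, tsub_zero]
  rw [hsymm, ← two_mul] at htotal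
  exact ENNReal.eq_inv_of_mul_eq_one_left (by rwa [mul_comm])

theorem gaussianPDFReal_le_inv_sqrt (μ : ℝ) (v : ℝ≥0) (x : ℝ) :
    gaussianPDFReal μ v x ≤ (√(2 * π * v))⁻¹ := by
  rw [gaussianPDFReal]
  refine mul_le_of_le_one_right (by positivity) (exp_le_one_iff.2 ?_)
  exact div_nonpos_of_nonpos_of_nonneg (neg_nonpos.2 (sq_nonneg _)) (by positivity)

theorem gaussianPDFReal_zero_one_le_exp_mul {t x : ℝ} (ht : 0 ≤ t) (hx : t ≤ x) :
    gaussianPDFReal 0 1 x ≤ exp (-t ^ 2 / 2) * gaussianPDFReal t 1 x := by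
  simp only [gaussianPDFReal, NNReal.coe_one, mul_one, sub_zero]
  rw [mul_left_comm, ← exp_add]
  gcongr
  nlinarith

theorem gaussianReal_zero_one_Ioi_le {t : ℝ} (ht : 0 ≤ t) :
    gaussianReal 0 1 (Ioi t) ≤ ENNReal.ofReal (exp (-t ^ 2 / 2) / 2) := by
  calc gaussianReal 0 1 (Ioi t) = ∫⁻ x in Ioi t, gaussianPDF 0 1 x :=
        gaussianReal_apply _ one_ne_zero _
    _ ≤ ∫⁻ x in Ioi t, ENNReal.ofReal (exp (-t ^ 2 / 2)) * gaussianPDF t 1 x := by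
        refine setLIntegral_mono ((measurable_gaussianPDF _ _).const_mul _) fun x hx => ?_
        rw [gaussianPDF, gaussianPDF, ← ENNReal.ofReal_mul (exp_pos _).le]
        exact ENNReal.ofReal_le_ofReal (gaussianPDFReal_zero_one_le_exp_mul ht (le_of_lt hx))
    _ = ENNReal.ofReal (exp (-t ^ 2 / 2)) * gaussianReal t 1 (Ioi t) := by
        rw [lintegral_const_mul _ (measurable_gaussianPDF _ _), gaussianReal_apply _ one_ne_zero]
    _ = ENNReal.ofReal (exp (-t ^ 2 / 2) / 2) := by
        rw [gaussianReal_Ioi_self one_ne_zero, ENNReal.ofReal_div_of_pos two_pos,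
          ENNReal.ofReal_ofNat]
        exact (div_eq_mul_inv _ _).symm

theorem gaussianReal_zero_one_Ioi_le_of_nonpos {t : ℝ} (ht : t ≤ 0) :
    gaussianReal 0 1 (Ioi t) ≤ ENNReal.ofReal (2⁻¹ - t / √(2 * π)) := by
  have hIoc : gaussianReal 0 1 (Ioc t 0) ≤ ENNReal.ofReal (-t / √(2 * π)) := by
    calc gaussianReal 0 1 (Ioc t 0) = ∫⁻ x in Ioc t 0, gaussianPDF 0 1 x :=
          gaussianReal_apply _ one_ne_zero _
      _ ≤ ∫⁻ _ in Ioc t 0, ENNReal.ofReal (√(2 * π))⁻¹ := by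
          refine setLIntegral_mono measurable_const fun x _ => ENNReal.ofReal_le_ofReal ?_
          simpa using gaussianPDFReal_le_inv_sqrt 0 1 x
      _ = ENNReal.ofReal (-t / √(2 * π)) := by
          rw [setLIntegral_const, Real.volume_Ioc, ← ENNReal.ofReal_mul (by positivity)]
          ring_nf
  calc gaussianReal 0 1 (Ioi t) ≤ gaussianReal 0 1 (Ioc t 0) + gaussianReal 0 1 (Ioi 0) := by
        rw [← Ioc_union_Ioi_eq_Ioi ht]
        exact measure_union_le _ _
    _ ≤ ENNReal.ofReal (-t / √(2 * π)) + ENNReal.ofReal 2⁻¹ := by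
        rw [gaussianReal_Ioi_self one_ne_zero, ENNReal.ofReal_inv_of_pos two_pos,
          ENNReal.ofReal_ofNat]
        exact add_le_add_left hIoc _
    _ = ENNReal.ofReal (2⁻¹ - t / √(2 * π)) := by
        rw [← ENNReal.ofReal_add (div_nonneg (neg_nonneg.2 ht) (sqrt_nonneg _)) (by norm_num)]
        ring_nf

theorem gaussianReal_zero_one_Ioi_le_exp_neg {t L : ℝ} (ht : 0 ≤ t) (hL : 2 * L - 1 ≤ t ^ 2) :
    gaussianReal 0 1 (Ioi t) ≤ ENNReal.ofReal (exp (-L)) := by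
  have hexp_half : exp (1 / 2) ≤ 2 := by
    have := exp_bound_div_one_sub_of_interval' (x := 1 / 2) (by norm_num) (by norm_num)
    norm_num at this ⊢
    exact this.le
  refine (gaussianReal_zero_one_Ioi_le ht).trans (ENNReal.ofReal_le_ofReal ?_)
  calc exp (-t ^ 2 / 2) / 2 ≤ exp (-L) * exp (1 / 2) / 2 := by
        rw [← exp_add]; gcongr; linarith
    _ ≤ exp (-L) := by nlinarith [exp_pos (-L)]

theorem gaussianReal_zero_one_Ioi_sub_div_le_of_sqrt_log_le {a ε δ : ℝ} (hε : ε ∈ Ioo 0 1)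
    (hδ : δ ∈ Ioo 0 1) (ha : √(2 * log (1.25 / δ)) ≤ a) :
    gaussianReal 0 1 (Ioi (a - ε / (2 * a))) ≤ ENNReal.ofReal δ := by
  obtain ⟨hε0, hε1⟩ := hε
  obtain ⟨hδ0, hδ1⟩ := hδ
  set L := log (1.25 / δ)
  have hexpL : exp (-L) = δ / 1.25 := by
    rw [exp_neg, exp_log (by positivity), inv_div]
  have hL : 1 / 5 ≤ L := by
    have h : log 1.25 ≤ L := log_le_log (by norm_num) (by rw [le_div_iff₀ hδ0]; linarith)
    linarith [one_sub_inv_le_log_of_pos (show (0 : ℝ) < 1.25 by norm_num)]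
  have ha0 : 0 < a := lt_of_lt_of_le (sqrt_pos.2 (by linarith)) ha
  have ha2 : 2 * L ≤ a ^ 2 := (sqrt_le_left ha0.le).1 ha
  set t := a - ε / (2 * a)
  rcases le_or_gt 0 t with ht | ht
  · have ht2 : t ^ 2 = a ^ 2 - ε + (ε / (2 * a)) ^ 2 := by simp only [t]; field_simp; ring
    refine (gaussianReal_zero_one_Ioi_le_exp_neg (L := L) ht (by nlinarith)).trans
      (ENNReal.ofReal_le_ofReal ?_)
    rw [hexpL]
    linarith [div_le_self hδ0.le (show (1 : ℝ) ≤ 1.25 by norm_num)]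
  · have ha2' : a ^ 2 < 1 / 2 := by
      have : a < ε / (2 * a) := by linarith
      rw [lt_div_iff₀ (by positivity)] at this
      nlinarith
    have hδ' : 15 / 16 < δ := by
      have := add_one_le_exp (-L)
      rw [hexpL] at this
      norm_num at this
      linarith
    have hnt : -t ≤ 1 / 5 := by
      have : ε / (2 * a) ≤ 1 / (2 * a) := by gcongr
      have : 1 / (2 * a) - a ≤ 1 / 5 := by
        rw [sub_le_iff_le_add, div_le_iff₀ (by positivity)]
        nlinarith
      linarith
    have hsqrt : 1 ≤ √(2 * π) := by
      rw [one_le_sqrt]; linarith [pi_gt_three]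
    refine (gaussianReal_zero_one_Ioi_le_of_nonpos ht.le).trans (ENNReal.ofReal_le_ofReal ?_)
    have : -t / √(2 * π) ≤ -t := div_le_self (by linarith) hsqrt
    rw [neg_div] at this
    linarith

theorem gaussianReal_le_exp_mul_add {μ μ' σ ε δ : ℝ} (hε : ε ∈ Ioo 0 1) (hδ : δ ∈ Ioo 0 1)
    (hb : 0 < |μ - μ'|) (hσ : |μ - μ'| * √(2 * log (1.25 / δ)) ≤ σ * ε) (s : Set ℝ) :
    gaussianReal μ (σ ^ 2).toNNReal s ≤
      ENNReal.ofReal (exp ε) * gaussianReal μ' (σ ^ 2).toNNReal s + ENNReal.ofReal δ := by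
  set b := |μ - μ'|
  have hL : 0 < log (1.25 / δ) := log_pos (by rw [lt_div_iff₀ hδ.1]; linarith [hδ.2])
  have hσ0 : 0 < σ := pos_of_mul_pos_left (lt_of_lt_of_le (by positivity) hσ) hε.1.le
  have hv : (σ ^ 2).toNNReal ≠ 0 := by
    simp only [ne_eq, Real.toNNReal_eq_zero, not_le]; positivity
  set τ := σ * (μ - μ') / b
  have hb2 : (μ - μ') ^ 2 = b ^ 2 := (sq_abs _).symm
  have hτ : τ ^ 2 = σ ^ 2 := by
    simp only [τ]; field_simp; linear_combination hb2
  have hτb : (μ - μ') * τ = σ * b := by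
    simp only [τ]; field_simp; linear_combination hb2
  have hbad : (fun z => μ + τ * z) ⁻¹'
      {x | ENNReal.ofReal (exp ε) * gaussianPDF μ' (σ ^ 2).toNNReal x
        < gaussianPDF μ (σ ^ 2).toNNReal x} = Ioi (σ * ε / b - ε / (2 * (σ * ε / b))) := by
    ext z
    simp only [mem_preimage, mem_ofPred_eq, ofReal_exp_mul_gaussianPDF_lt_iff hv, mem_Ioi,
      Real.coe_toNNReal _ (sq_nonneg σ)]
    have hloss : (μ + τ * z - μ') ^ 2 - (μ + τ * z - μ) ^ 2 = b ^ 2 + 2 * σ * b * z := by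
      linear_combination hb2 + 2 * z * hτb
    have hthreshold :
        σ * ε / b - ε / (2 * (σ * ε / b)) = (2 * σ ^ 2 * ε - b ^ 2) / (2 * σ * b) := by
      field_simp [hε.1.ne']
    rw [hloss, hthreshold, div_lt_iff₀ (by positivity)]
    constructor <;> intro h <;> linarith
  have hmap : gaussianReal μ (σ ^ 2).toNNReal = (gaussianReal 0 1).map (fun z => μ + τ * z) := by
    rw [gaussianReal_map_const_add_mul, hτ]
  rw [gaussianReal_of_var_ne_zero _ hv, gaussianReal_of_var_ne_zero _ hv]
  refine (withDensity_apply_le_mul_add (measurable_gaussianPDF _ _) _ s).trans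
    (add_le_add le_rfl ?_)
  rw [← gaussianReal_of_var_ne_zero _ hv, hmap, Measure.map_apply (by fun_prop)
    (measurableSet_lt (by fun_prop) (by fun_prop)), hbad]
  exact gaussianReal_zero_one_Ioi_sub_div_le_of_sqrt_log_le hε hδ ((le_div_iff₀ hb).2 (by linarith))

/-- The one-dimensional Gaussian mechanism `M(D) = f(D) + N(0, σ²)`
(i.e. a Gaussian with mean `f(D)` and variance `σ²`) with sensitivity `Δ`
is `(ε, δ)`-differentially private whenever `ε, δ ∈ (0,1)` and
`σ ≥ Δ·√(2·ln(1.25/δ))/ε`. -/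
theorem gaussian_mechanism {D : Type*} (adj : D → D → Prop)
    (f : D → ℝ) (Δ σ ε δ : ℝ)
    (hΔ : ∀ d d' : D, adj d d' → |f d - f d'| ≤ Δ)
    (hε : ε ∈ Set.Ioo (0 : ℝ) 1) (hδ : δ ∈ Set.Ioo (0 : ℝ) 1)
    (hσ : σ ≥ Δ * Real.sqrt (2 * Real.log (1.25 / δ)) / ε) :
    IsDP adj (fun d => gaussianReal (f d) (σ ^ 2).toNNReal) ε δ := by
  intro s _ d d' hadj
  rcases eq_or_ne (f d) (f d') with heq | hne
  · dsimp only
    rw [heq]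
    exact le_add_right (le_mul_of_one_le_left' (ENNReal.one_le_ofReal.2 (one_le_exp hε.1.le)))
  · refine gaussianReal_le_exp_mul_add hε hδ (abs_pos.2 (sub_ne_zero.2 hne)) ?_ s
    calc |f d - f d'| * √(2 * log (1.25 / δ)) ≤ Δ * √(2 * log (1.25 / δ)) :=
          mul_le_mul_of_nonneg_right (hΔ d d' hadj) (sqrt_nonneg _)
      _ ≤ σ * ε := (div_le_iff₀ hε.1).1 hσ
end

section
/- Privacy amplification by subsampling: if M is (ε, δ)-differentially private, then the mechanism that first selects each record into a subsample independently with probability γ = B/N and then applies M to the subsample is (ln(1 + γ(e^ε − 1)), γδ)-differentially private; in particular since ln(1 + γ(e^ε − 1)) ≤ γ(e^ε - 1) ≤ γ·ε·e^ε, for small ε the amplified parameter is at most γε·e^ε. -/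
open MeasureTheory

/-- Two (possibly subsampled) datasets are adjacent if they agree except in one record. -/
def AdjOne {ι R : Type*} (x x' : ι → R) : Prop :=
  ∃ i : ι, ∀ j : ι, j ≠ i → x j = x' j

/-!
Condition on whether the record `i` in which `x` and `x'` differ is sampled. Fixing the other
coin flips, let `A`, `A'` be the output probabilities of `M` on `x`, `x'` when `i` is sampled and
`C` the common one when it is not: the subsampled mechanism outputs `γA + (1-γ)C` and
`γA' + (1-γ)C`, while `M` being DP gives `A ≤ e^ε C + δ` and `A ≤ e^ε A' + δ`. Using the bound
through the smaller of `C` and `A'` yields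
`γA + (1-γ)C ≤ (1 + γ(e^ε - 1))(γA' + (1-γ)C) + γδ`, and integrating over the other coin flips
gives the claim. The bound on the privacy parameter is `log (1 + t) ≤ t` and `e^ε - 1 ≤ ε e^ε`.
-/

open scoped ENNReal NNReal

theorem Real.exp_sub_one_le_mul_exp (x : ℝ) : Real.exp x - 1 ≤ x * Real.exp x := by
  have h := mul_le_mul_of_nonneg_right (Real.one_sub_le_exp_neg x) (Real.exp_pos x).le
  rw [← Real.exp_add, neg_add_cancel, Real.exp_zero] at h
  linarith

theorem Real.log_one_add_mul_exp_sub_one_le {γ ε : ℝ} (hγ : 0 ≤ γ) (hε : 0 ≤ ε) :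
    Real.log (1 + γ * (Real.exp ε - 1)) ≤ γ * ε * Real.exp ε :=
  calc Real.log (1 + γ * (Real.exp ε - 1)) ≤ γ * (Real.exp ε - 1) := by
        have : 0 ≤ γ * (Real.exp ε - 1) := mul_nonneg hγ (by linarith [Real.one_le_exp hε])
        linarith [Real.log_le_sub_one_of_pos (by linarith : 0 < 1 + γ * (Real.exp ε - 1))]
    _ ≤ γ * ε * Real.exp ε := by
        rw [mul_assoc]; exact mul_le_mul_of_nonneg_left (Real.exp_sub_one_le_mul_exp ε) hγ

theorem ENNReal.ofReal_one_add_mul_sub_one {p : ℝ≥0} (hp : p ≤ 1) {e : ℝ} (he : 0 ≤ e) :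
    ENNReal.ofReal (1 + p * (e - 1)) = 1 - p + p * ENNReal.ofReal e := by
  rw [show 1 + p * (e - 1) = (1 - p) + p * e by ring,
    ENNReal.ofReal_add (by simpa using hp) (by positivity), ENNReal.ofReal_sub _ p.coe_nonneg,
    ENNReal.ofReal_one, ENNReal.ofReal_mul p.coe_nonneg, ENNReal.ofReal_coe_nnreal]

theorem ENNReal.mix_le_mul_mix_add {g E A A' C D : ℝ≥0∞} (hg : g ≤ 1) (hE : 1 ≤ E)
    (hAC : A ≤ E * C + D) (hAA' : A ≤ E * A' + D) :
    g * A + (1 - g) * C ≤ (1 - g + g * E) * (g * A' + (1 - g) * C) + g * D := by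
  have hsum : g + (1 - g) = 1 := add_tsub_cancel_of_le hg
  have hK : 1 ≤ 1 - g + g * E := by
    calc 1 = 1 - g + g * 1 := by rw [mul_one, add_comm, hsum]
      _ ≤ 1 - g + g * E := by gcongr
  rcases le_total C A' with hCA' | hA'C
  · calc g * A + (1 - g) * C ≤ g * (E * C + D) + (1 - g) * C := by gcongr
      _ = (1 - g + g * E) * C + g * D := by ring
      _ ≤ (1 - g + g * E) * (g * A' + (1 - g) * C) + g * D := by
        gcongr
        calc C = g * C + (1 - g) * C := by rw [← add_mul, hsum, one_mul]
          _ ≤ g * A' + (1 - g) * C := by gcongr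
  · obtain ⟨t, rfl⟩ := le_iff_exists_add.mp hA'C
    calc g * A + (1 - g) * (A' + t) ≤ g * (E * A' + D) + (1 - g) * (A' + t) := by gcongr
      _ = (1 - g + g * E) * A' + (1 - g) * t + g * D := by ring
      _ ≤ (1 - g + g * E) * A' + (1 - g + g * E) * ((1 - g) * t) + g * D :=
        add_le_add (add_le_add le_rfl (le_mul_of_one_le_left' hK)) le_rfl
      _ = (1 - g + g * E) * (g * A' + (1 - g) * (A' + t)) + g * D := by
        rw [mul_add (1 - g), ← add_assoc, ← add_mul, hsum, one_mul, mul_add]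

theorem MeasureTheory.lintegral_le_mul_lintegral_add_of_le {α : Type*} [MeasurableSpace α]
    {μ : Measure α} [IsProbabilityMeasure μ] {f g : α → ℝ≥0∞} (hg : Measurable g) {K c : ℝ≥0∞}
    (hfg : ∀ a, f a ≤ K * g a + c) : ∫⁻ a, f a ∂μ ≤ K * ∫⁻ a, g a ∂μ + c :=
  calc ∫⁻ a, f a ∂μ ≤ ∫⁻ a, K * g a + c ∂μ := lintegral_mono hfg
    _ = K * ∫⁻ a, g a ∂μ + c := by
      rw [lintegral_add_right _ measurable_const, lintegral_const_mul _ hg, lintegral_const,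
        measure_univ, mul_one]

theorem MeasureTheory.lintegral_pi_eq_lintegral_update {ι : Type*} [Fintype ι] [DecidableEq ι]
    {X : ι → Type*} [∀ i, MeasurableSpace (X i)] (μ : ∀ i, Measure (X i))
    [∀ i, IsProbabilityMeasure (μ i)] {f : (∀ i, X i) → ℝ≥0∞} (hf : Measurable f) (i : ι) :
    ∫⁻ x, f x ∂Measure.pi μ = ∫⁻ x, ∫⁻ a, f (Function.update x i a) ∂μ i ∂Measure.pi μ := by
  have hmarg := lmarginal_singleton (μ := μ) f i
  refine lintegral_eq_of_lmarginal_eq {i} hf (hmarg ▸ hf.lmarginal μ) ?_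
  rw [← hmarg]
  -- the marginal over `{i}` does not depend on coordinate `i`, and `μ i` is a probability measure
  ext x
  rw [lmarginal_singleton (∫⋯∫⁻_{i}, f ∂μ) i]
  simp only [lmarginal_update_of_mem μ (Finset.mem_singleton_self i), lintegral_const,
    measure_univ, mul_one]

theorem PMF.lintegral_bernoulli (p : ℝ≥0) (hp : p ≤ 1) (f : Bool → ℝ≥0∞) :
    ∫⁻ b, f b ∂(PMF.bernoulli p hp).toMeasure = p * f true + (1 - p) * f false := by
  simp [lintegral_fintype, PMF.bernoulli_apply, mul_comm, ENNReal.coe_sub]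

section Subsample

variable {ι R : Type*}

def subsample (b : ι → Bool) (x : ι → R) : ι → Option R :=
  fun i => if b i then some (x i) else none

theorem AdjOne.subsample {x x' : ι → R} (h : AdjOne x x') (b : ι → Bool) :
    AdjOne (subsample b x) (subsample b x') := by
  obtain ⟨i, hi⟩ := h
  exact ⟨i, fun j hj => by simp only [_root_.subsample, hi j hj]⟩

variable [DecidableEq ι]

theorem adjOne_subsample_update (b : ι → Bool) (i : ι) (u v : Bool) (x : ι → R) :
    AdjOne (subsample (Function.update b i u) x) (subsample (Function.update b i v) x) :=
  ⟨i, fun j hj => by simp only [subsample, Function.update_of_ne hj]⟩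

theorem subsample_update_false {x x' : ι → R} {i : ι} (h : ∀ j, j ≠ i → x j = x' j)
    (b : ι → Bool) :
    subsample (Function.update b i false) x = subsample (Function.update b i false) x' := by
  funext j
  rcases eq_or_ne j i with rfl | hj
  · simp [subsample]
  · simp only [subsample, h j hj]

end Subsample

section PoissonSubsampled

variable {ι R S : Type*} [Fintype ι] [MeasurableSpace S]

noncomputable def poissonSubsampled (p : ℝ≥0) (hp : p ≤ 1) (M : (ι → Option R) → Measure S)
    (x : ι → R) : Measure S :=
  (Measure.pi fun _ : ι => (PMF.bernoulli p hp).toMeasure).bind fun b => M (subsample b x)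

theorem poissonSubsampled_apply [DecidableEq ι] (p : ℝ≥0) (hp : p ≤ 1)
    (M : (ι → Option R) → Measure S) (x : ι → R) {s : Set S} (hs : MeasurableSet s) (i : ι) :
    poissonSubsampled p hp M x s =
      ∫⁻ b, p * M (subsample (Function.update b i true) x) s
        + (1 - p) * M (subsample (Function.update b i false) x) s
        ∂Measure.pi fun _ : ι => (PMF.bernoulli p hp).toMeasure := by
  rw [poissonSubsampled, Measure.bind_apply hs (measurable_of_finite _).aemeasurable,
    lintegral_pi_eq_lintegral_update _ (measurable_of_finite _) i]
  simp only [PMF.lintegral_bernoulli]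

theorem IsDP.poissonSubsampled {M : (ι → Option R) → Measure S} {ε δ : ℝ} (hε : 0 ≤ ε)
    (hM : IsDP AdjOne M ε δ) (p : ℝ≥0) (hp : p ≤ 1) :
    IsDP AdjOne (poissonSubsampled p hp M) (Real.log (1 + p * (Real.exp ε - 1))) (p * δ) := by
  classical
  intro s hs x x' ⟨i, hxx'⟩
  have hexp : 1 ≤ Real.exp ε := Real.one_le_exp hε
  have hE : 1 ≤ ENNReal.ofReal (Real.exp ε) := by simpa using hexp
  rw [poissonSubsampled_apply p hp M x hs i, poissonSubsampled_apply p hp M x' hs i,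
    Real.exp_log (by nlinarith [p.coe_nonneg]),
    ENNReal.ofReal_one_add_mul_sub_one hp (Real.exp_pos ε).le,
    ENNReal.ofReal_mul p.coe_nonneg, ENNReal.ofReal_coe_nnreal]
  refine lintegral_le_mul_lintegral_add_of_le (measurable_of_finite _) fun b => ?_
  rw [← subsample_update_false hxx' b]
  exact ENNReal.mix_le_mul_mix_add (by exact_mod_cast hp) hE
    (hM s hs _ _ (adjOne_subsample_update b i true false x))
    (hM s hs _ _ (AdjOne.subsample ⟨i, hxx'⟩ _))

end PoissonSubsampled

theorem dp_subsampling_general {ι R S : Type*} [Fintype ι] [MeasurableSpace S]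
    (M : (ι → Option R) → Measure S) (ε δ γ : ℝ)
    (hγpos : 0 < γ) (hγlt : γ < 1)
    (hε : 0 ≤ ε)
    (hDP : IsDP AdjOne M ε δ) :
    IsDP AdjOne
      (fun x : ι → R =>
        (Measure.pi fun _ : ι =>
            (PMF.bernoulli (Real.toNNReal γ)
              (Real.toNNReal_le_one.mpr hγlt.le)).toMeasure).bind
          (fun b : ι → Bool => M (fun i => if b i then some (x i) else none)))
      (Real.log (1 + γ * (Real.exp ε - 1))) (γ * δ) ∧
    Real.log (1 + γ * (Real.exp ε - 1)) ≤ γ * ε * Real.exp ε := by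
  have hγ : (γ.toNNReal : ℝ) = γ := Real.coe_toNNReal γ hγpos.le
  refine ⟨?_, Real.log_one_add_mul_exp_sub_one_le hγpos.le hε⟩
  have h := hDP.poissonSubsampled hε γ.toNNReal (Real.toNNReal_le_one.mpr hγlt.le)
  rw [hγ] at h
  exact h

/-- Privacy amplification by Poisson subsampling: if `M` is `(ε,δ)`-DP (on datasets of
optional records, where a record may be absent), then the mechanism that first includes
each record independently with probability `γ = B/N` and then applies `M` to the
subsample is `(ln(1 + γ(e^ε − 1)), γδ)`-DP; moreover
`ln(1 + γ(e^ε − 1)) ≤ γ·ε·e^ε`. -/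
theorem dp_subsampling {ι R S : Type*} [Fintype ι] [MeasurableSpace S]
    (M : (ι → Option R) → Measure S) (ε δ γ : ℝ) (B N : ℕ)
    (hN : 0 < N) (hγdef : γ = (B : ℝ) / N) (hγpos : 0 < γ) (hγlt : γ < 1)
    (hε : 0 ≤ ε)
    (hDP : IsDP AdjOne M ε δ) :
    IsDP AdjOne
      (fun x : ι → R =>
        (Measure.pi fun _ : ι =>
            (PMF.bernoulli (Real.toNNReal γ)
              (Real.toNNReal_le_one.mpr hγlt.le)).toMeasure).bind
          (fun b : ι → Bool => M (fun i => if b i then some (x i) else none)))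
      (Real.log (1 + γ * (Real.exp ε - 1))) (γ * δ) ∧
    Real.log (1 + γ * (Real.exp ε - 1)) ≤ γ * ε * Real.exp ε :=
  dp_subsampling_general M ε δ γ hγpos hγlt hε hDP
end
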